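/- Let G have minimum degree δ and maximum degree Δ. For every vertex v ∈ V, every integer m ≥ 1, and every real K with 0 < K ≤ δ/(10Δ), the probability that there exists a directed path γ within V (not using the source v_s) starting at v, having at least m edges, and satisfying T(γ) ≤ K·m is at most (e/10)/(1 − e/10). -/

import Mathlib

open MeasureTheory ProbabilityTheory SimpleGraph
open scoped Classical ENNReal

noncomputable section

/-- The passage time of a walk in the auxiliary graph, using only internal (within-`V`)
directed edges, which are indexed by darts of `G`. -/
def walkTime {V : Type*} {G : SimpleGraph V} {Ω : Type*}
    (τ : G.Dart ⊕ V → Ω → ℝ) (ω : Ω) {u w : V} (p : G.Walk u w) : ℝ :=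
  (p.darts.map fun d => τ (Sum.inl d) ω).sum

/-- The first passage time `T(v, v_s)` from `v` to the adjoined source `v_s`: the minimum,
over directed paths `γ` from `v` to the source (a simple path inside `G` from `v` to some
vertex `u`, followed by the directed edge `(u, v_s)`), of the sum of the edge weights. -/
def srcTime {V : Type*} {G : SimpleGraph V} {Ω : Type*}
    (τ : G.Dart ⊕ V → Ω → ℝ) (v : V) (ω : Ω) : ℝ :=
  ⨅ p : (Σ u : V, {q : G.Walk v u // q.IsPath}),
    walkTime τ ω p.2.1 + τ (Sum.inr p.1) ω

/-- The ball of radius `m` about `v` in the graph distance. -/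
def gball {V : Type*} [Fintype V] (G : SimpleGraph V) (v : V) (m : ℕ) : Finset V :=
  Finset.univ.filter fun u => G.dist v u ≤ m

/-- `m*(v) = min { m ≥ 1 : m ⬝ |B_m(v)| ≥ n }`. -/
def mStar {V : Type*} [Fintype V] (G : SimpleGraph V) (v : V) : ℕ :=
  sInf {m : ℕ | 1 ≤ m ∧ Fintype.card V ≤ m * (gball G v m).card}

/-!
Union bound over the paths of length `k ≥ m` starting at `v`, of which there are at most `Δ^k`.
Every edge weight on such a path is exponential with rate `1/deg ≤ 1/δ`, so the Chernoff bound
with parameter `1/K` gives `P(T(γ) ≤ K m) ≤ e^m (K/δ)^k`. Since `Δ K/δ ≤ 1/10`, the sum is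
at most `∑_{k ≥ m} e^m 10^{-k} ≤ ∑_{k ≥ 1} (e/10)^k`.
-/

namespace ProbabilityTheory
open Real Set

lemma integral_exp_mul_expMeasure {r t : ℝ} (hr : 0 < r) (ht : t < r) :
    ∫ x, exp (t * x) ∂expMeasure r = r / (r - t) := by
  have hdensity : ∀ x, (exponentialPDF r x).toReal • exp (t * x) =
      (Ici 0).indicator (fun x => r * exp ((t - r) * x)) x := by
    intro x
    rcases le_or_gt 0 x with hx | hx
    · rw [exponentialPDF_of_nonneg hx, ENNReal.toReal_ofReal (by positivity),
        indicator_of_mem (mem_Ici.mpr hx), smul_eq_mul, mul_assoc, ← exp_add]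
      ring_nf
    · simp [exponentialPDF_of_neg hx, indicator_of_notMem (notMem_Ici.mpr hx)]
  have hmeas : Measurable (exponentialPDF r) := (measurable_exponentialPDFReal r).ennreal_ofReal
  change ∫ x, exp (t * x) ∂volume.withDensity (exponentialPDF r) = _
  rw [integral_withDensity_eq_integral_toReal_smul hmeas
      (Filter.Eventually.of_forall fun _ => ENNReal.ofReal_lt_top)]
  simp_rw [hdensity]
  rw [integral_indicator measurableSet_Ici, integral_Ici_eq_integral_Ioi, integral_const_mul,
    integral_exp_mul_Ioi (by linarith) 0, mul_zero, exp_zero, ← neg_sub r t, div_neg, neg_div,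
    neg_neg, mul_one_div]

lemma mgf_of_map_eq_expMeasure {Ω : Type*} [MeasurableSpace Ω] {P : Measure Ω} {X : Ω → ℝ}
    (hX : AEMeasurable X P) {r t : ℝ} (hr : 0 < r) (ht : t < r)
    (hmap : P.map X = expMeasure r) : mgf X P t = r / (r - t) := by
  rw [← mgf_id_map hX, hmap, mgf]
  exact integral_exp_mul_expMeasure hr ht

lemma measureReal_sum_le_le_of_expMeasure {Ω ι : Type*} [MeasurableSpace Ω] {P : Measure Ω}
    [IsProbabilityMeasure P] {X : ι → Ω → ℝ} (hX : ∀ i, Measurable (X i))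
    (hindep : iIndepFun X P) {r : ι → ℝ} {s : Finset ι} (hr : ∀ i ∈ s, 0 < r i)
    (hmap : ∀ i ∈ s, P.map (X i) = expMeasure (r i)) {θ : ℝ} (hθ : 0 < θ) (a : ℝ) :
    P.real {ω | ∑ i ∈ s, X i ω ≤ a} ≤ exp (θ * a) * ∏ i ∈ s, r i / (r i + θ) := by
  have hmgf : mgf (∑ i ∈ s, X i) P (-θ) = ∏ i ∈ s, r i / (r i + θ) := by
    rw [hindep.mgf_sum hX]
    refine Finset.prod_congr rfl fun i hi => ?_
    rw [mgf_of_map_eq_expMeasure (hX i).aemeasurable (hr i hi) (by linarith [hr i hi])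
      (hmap i hi), sub_neg_eq_add]
  have hint : Integrable (fun ω => exp (-θ * (∑ i ∈ s, X i) ω)) P := by
    refine mgf_pos_iff.mp ?_
    rw [hmgf]
    exact Finset.prod_pos fun i hi => div_pos (hr i hi) (by linarith [hr i hi])
  have hchernoff := measure_le_le_exp_mul_mgf a (neg_nonpos.mpr hθ.le) hint
  simpa only [Finset.sum_apply, neg_neg, hmgf] using hchernoff

end ProbabilityTheory

namespace SimpleGraph

variable {V Ω : Type*} {G : SimpleGraph V}

lemma Walk.IsPath.walkTime_eq_sum {τ : G.Dart ⊕ V → Ω → ℝ} {u w : V} {p : G.Walk u w}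
    (hp : p.IsPath) (ω : Ω) :
    walkTime τ ω p = ∑ d ∈ p.darts.toFinset, τ (.inl d) ω :=
  (List.sum_toFinset _ (p.darts_nodup_of_support_nodup hp.support_nodup)).symm

variable [Fintype V] [DecidableRel G.Adj]

variable (G) in
theorem sum_card_finsetWalkLength_le_maxDegree_pow [DecidableEq V] (k : ℕ) (v : V) :
    ∑ u, (G.finsetWalkLength k v u).card ≤ G.maxDegree ^ k := by
  induction k generalizing v with
  | zero =>
    have hnil (u : V) : (G.finsetWalkLength 0 v u).card = if v = u then 1 else 0 := by
      unfold finsetWalkLength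
      split_ifs with h
      · subst h; rfl
      · rfl
    simp [hnil]
  | succ k ih =>
    have hcons (u : V) : (G.finsetWalkLength (k + 1) v u).card ≤
        ∑ w : G.neighborSet v, (G.finsetWalkLength k w u).card :=
      Finset.card_biUnion_le.trans_eq (by simp only [Finset.card_map])
    calc ∑ u, (G.finsetWalkLength (k + 1) v u).card
        ≤ ∑ u, ∑ w : G.neighborSet v, (G.finsetWalkLength k w u).card :=
          Finset.sum_le_sum fun u _ => hcons u
      _ = ∑ w : G.neighborSet v, ∑ u, (G.finsetWalkLength k w u).card := Finset.sum_comm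
      _ ≤ ∑ _w : G.neighborSet v, G.maxDegree ^ k := Finset.sum_le_sum fun w _ => ih w
      _ = G.degree v * G.maxDegree ^ k := by simp [← G.card_neighborSet_eq_degree]
      _ ≤ G.maxDegree ^ (k + 1) := by
          rw [pow_succ']
          exact Nat.mul_le_mul_right _ (G.degree_le_maxDegree v)

lemma measureReal_walkTime_le [MeasurableSpace Ω]
    {P : Measure Ω} [IsProbabilityMeasure P] {τ : G.Dart ⊕ V → Ω → ℝ}
    (hmeas : ∀ e, Measurable (τ e)) (hindep : iIndepFun τ P)
    (hdist_edge : ∀ d : G.Dart,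
      P.map (τ (Sum.inl d)) = expMeasure (1 / (G.degree d.snd : ℝ)))
    (hδ : 0 < G.minDegree) {K : ℝ} (hK : 0 < K) {u w : V} {p : G.Walk u w} (hp : p.IsPath)
    (a : ℝ) :
    P.real {ω | walkTime τ ω p ≤ a} ≤ Real.exp (a / K) * (K / G.minDegree) ^ p.length := by
  have hδ' : (0 : ℝ) < G.minDegree := mod_cast hδ
  have hdeg (d : G.Dart) : (G.minDegree : ℝ) ≤ G.degree d.snd :=
    mod_cast G.minDegree_le_degree _
  have hrate (d : G.Dart) : 0 < 1 / (G.degree d.snd : ℝ) :=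
    one_div_pos.mpr (hδ'.trans_le (hdeg d))
  have hfactor (d : G.Dart) :
      1 / (G.degree d.snd : ℝ) / (1 / G.degree d.snd + 1 / K) ≤ K / G.minDegree :=
    calc 1 / (G.degree d.snd : ℝ) / (1 / G.degree d.snd + 1 / K)
        ≤ 1 / (G.degree d.snd : ℝ) / (1 / K) :=
          div_le_div_of_nonneg_left (hrate d).le (by positivity) (by linarith [hrate d])
      _ = K / G.degree d.snd := by field_simp
      _ ≤ K / G.minDegree := div_le_div_of_nonneg_left hK.le hδ' (hdeg d)
  have hchernoff := measureReal_sum_le_le_of_expMeasure (fun d => hmeas (.inl d))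
    (hindep.precomp Sum.inl_injective) (s := p.darts.toFinset) (fun d _ => hrate d)
    (fun d _ => hdist_edge d) (one_div_pos.mpr hK) a
  have hcard : p.darts.toFinset.card = p.length := by
    rw [List.toFinset_card_of_nodup (p.darts_nodup_of_support_nodup hp.support_nodup),
      Walk.length_darts]
  simp_rw [← hp.walkTime_eq_sum, one_div_mul_eq_div] at hchernoff
  refine hchernoff.trans (mul_le_mul_of_nonneg_left ?_ (Real.exp_pos _).le)
  calc _ ≤ ∏ _d ∈ p.darts.toFinset, K / (G.minDegree : ℝ) :=
        Finset.prod_le_prod (fun d _ => by have := hrate d; positivity) fun d _ => hfactor d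
    _ = (K / G.minDegree) ^ p.length := by rw [Finset.prod_const, hcard]

lemma measureReal_exists_path_length_eq_le [DecidableEq V] [MeasurableSpace Ω]
    {P : Measure Ω} [IsProbabilityMeasure P] {τ : G.Dart ⊕ V → Ω → ℝ}
    (hmeas : ∀ e, Measurable (τ e)) (hindep : iIndepFun τ P)
    (hdist_edge : ∀ d : G.Dart,
      P.map (τ (Sum.inl d)) = expMeasure (1 / (G.degree d.snd : ℝ)))
    (hδ : 0 < G.minDegree) {K : ℝ} (hK : 0 < K) (v : V) (k : ℕ) (a : ℝ) :
    P.real {ω | ∃ (u : V) (p : G.Walk v u), p.IsPath ∧ p.length = k ∧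
        walkTime τ ω p ≤ a} ≤
      G.maxDegree ^ k * (Real.exp (a / K) * (K / G.minDegree) ^ k) := by
  set paths := Finset.univ.sigma fun u => (G.finsetWalkLength k v u).filter Walk.IsPath
  have hcover : {ω | ∃ (u : V) (p : G.Walk v u), p.IsPath ∧ p.length = k ∧
      walkTime τ ω p ≤ a} ⊆ ⋃ q ∈ paths, {ω | walkTime τ ω q.2 ≤ a} := by
    rintro ω ⟨u, p, hp, rfl, hle⟩
    exact Set.mem_iUnion₂.mpr ⟨⟨u, p⟩, by simp [paths, hp, mem_finsetWalkLength_iff], hle⟩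
  have hcard : paths.card ≤ G.maxDegree ^ k := by
    rw [Finset.card_sigma]
    exact (Finset.sum_le_sum fun u _ => Finset.card_filter_le _ _).trans
      (G.sum_card_finsetWalkLength_le_maxDegree_pow k v)
  calc _ ≤ ∑ q ∈ paths, P.real {ω | walkTime τ ω q.2 ≤ a} :=
        (measureReal_mono hcover (measure_ne_top _ _)).trans (measureReal_biUnion_finset_le _ _)
    _ ≤ paths.card * (Real.exp (a / K) * (K / G.minDegree) ^ k) := by
        rw [← nsmul_eq_mul]
        refine Finset.sum_le_card_nsmul _ _ _ fun q hq => ?_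
        obtain ⟨hlen, hpath⟩ := Finset.mem_filter.mp (Finset.mem_sigma.mp hq).2
        rw [← mem_finsetWalkLength_iff.mp hlen]
        exact measureReal_walkTime_le hmeas hindep hdist_edge hδ hK hpath a
    _ ≤ G.maxDegree ^ k * (Real.exp (a / K) * (K / G.minDegree) ^ k) := by
        gcongr
        exact_mod_cast hcard

end SimpleGraph

lemma sum_Ico_exp_mul_pow_le {m : ℕ} (hm : 1 ≤ m) (n : ℕ) {x : ℝ} (hx0 : 0 ≤ x)
    (hx : x ≤ 1 / 10) :
    ∑ k ∈ Finset.Ico m n, Real.exp m * x ^ k ≤ (Real.exp 1 / 10) / (1 - Real.exp 1 / 10) := by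
  have he : Real.exp 1 / 10 < 1 := by linarith [Real.exp_one_lt_d9]
  have he' : 0 ≤ Real.exp 1 / 10 := by positivity
  have hterm : ∀ k ∈ Finset.Ico m n, Real.exp m * x ^ k ≤ (Real.exp 1 / 10) ^ k := by
    intro k hk
    calc Real.exp m * x ^ k ≤ Real.exp 1 ^ k * (1 / 10) ^ k := by
          rw [← Real.exp_one_pow]
          gcongr
          · exact Real.one_le_exp zero_le_one
          · exact (Finset.mem_Ico.mp hk).1
      _ = (Real.exp 1 / 10) ^ k := by rw [← mul_pow, mul_one_div]
  calc _ ≤ ∑ k ∈ Finset.Ico m n, (Real.exp 1 / 10) ^ k := Finset.sum_le_sum hterm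
    _ ≤ (Real.exp 1 / 10) ^ m / (1 - Real.exp 1 / 10) := geom_sum_Ico_le_of_lt_one he' he
    _ ≤ (Real.exp 1 / 10) / (1 - Real.exp 1 / 10) := by
        gcongr
        exact pow_le_of_le_one he' he.le (by omega)

theorem no_short_path_bound_general
    {V : Type*} [Fintype V] (G : SimpleGraph V) [DecidableRel G.Adj]
    {Ω : Type*} [MeasurableSpace Ω] (P : Measure Ω) [IsProbabilityMeasure P]
    (τ : G.Dart ⊕ V → Ω → ℝ)
    (hmeas : ∀ e, Measurable (τ e))
    (hindep : iIndepFun τ P)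
    (hdist_edge : ∀ d : G.Dart,
      P.map (τ (Sum.inl d)) = expMeasure (1 / (G.degree d.snd : ℝ)))
    (v : V) (m : ℕ) (hm : 1 ≤ m)
    (K : ℝ) (hK0 : 0 < K) (hK : K ≤ (G.minDegree : ℝ) / (10 * (G.maxDegree : ℝ))) :
    (P {ω | ∃ (u : V) (p : G.Walk v u), p.IsPath ∧ m ≤ p.length ∧
        walkTime τ ω p ≤ K * m}).toReal ≤
      (Real.exp 1 / 10) / (1 - Real.exp 1 / 10) := by
  obtain ⟨hδ, hΔ⟩ : (0 : ℝ) < G.minDegree ∧ 0 < 10 * (G.maxDegree : ℝ) :=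
    (div_pos_iff.mp (hK0.trans_le hK)).resolve_right fun h => h.1.not_ge (by positivity)
  have hratio : (G.maxDegree : ℝ) * (K / G.minDegree) ≤ 1 / 10 := by
    rw [le_div_iff₀ hΔ] at hK
    rw [mul_div_assoc', div_le_div_iff₀ hδ (by norm_num)]
    linarith
  have hcover : {ω | ∃ (u : V) (p : G.Walk v u), p.IsPath ∧ m ≤ p.length ∧
      walkTime τ ω p ≤ K * m} ⊆ ⋃ k ∈ Finset.Ico m (Fintype.card V),
        {ω | ∃ (u : V) (p : G.Walk v u), p.IsPath ∧ p.length = k ∧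
          walkTime τ ω p ≤ K * m} := by
    rintro ω ⟨u, p, hp, hm, hle⟩
    exact Set.mem_biUnion (Finset.mem_Ico.mpr ⟨hm, hp.length_lt⟩) ⟨u, p, hp, rfl, hle⟩
  calc _ ≤ ∑ k ∈ Finset.Ico m (Fintype.card V),
        G.maxDegree ^ k * (Real.exp (K * m / K) * (K / G.minDegree) ^ k) :=
        (measureReal_mono hcover (measure_ne_top _ _)).trans <|
          (measureReal_biUnion_finset_le _ _).trans <| Finset.sum_le_sum fun k _ =>
            measureReal_exists_path_length_eq_le hmeas hindep hdist_edge
              (mod_cast hδ) hK0 v k (K * m)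
    _ = ∑ k ∈ Finset.Ico m (Fintype.card V),
        Real.exp m * (G.maxDegree * (K / G.minDegree)) ^ k := by
        refine Finset.sum_congr rfl fun k _ => ?_
        rw [mul_div_cancel_left₀ _ hK0.ne', mul_pow]
        ring
    _ ≤ _ := sum_Ico_exp_mul_pow_le hm _ (by positivity) hratio

/-- **No short paths** (key step in the lower bound of Theorem 1.1): if `G` has minimum
degree `δ` and maximum degree `Δ`, then for every vertex `v`, every `m ≥ 1` and every
`K` with `0 < K ≤ δ/(10Δ)`, the probability that some directed path inside `V` starting
at `v` with at least `m` edges has passage time at most `K m` is at most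
`(e/10)/(1 − e/10)`. -/
theorem no_short_path_bound
    {V : Type*} [Fintype V] [DecidableEq V] (G : SimpleGraph V) [DecidableRel G.Adj]
    (hG : G.Connected)
    {Ω : Type*} [MeasurableSpace Ω] (P : Measure Ω) [IsProbabilityMeasure P]
    (τ : G.Dart ⊕ V → Ω → ℝ)
    (hmeas : ∀ e, Measurable (τ e))
    (hindep : iIndepFun τ P)
    (hdist_edge : ∀ d : G.Dart,
      P.map (τ (Sum.inl d)) = expMeasure (1 / (G.degree d.snd : ℝ)))
    (hdist_src : ∀ u : V,
      P.map (τ (Sum.inr u)) = expMeasure (1 / (Fintype.card V : ℝ)))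
    (v : V) (m : ℕ) (hm : 1 ≤ m)
    (K : ℝ) (hK0 : 0 < K) (hK : K ≤ (G.minDegree : ℝ) / (10 * (G.maxDegree : ℝ))) :
    (P {ω | ∃ (u : V) (p : G.Walk v u), p.IsPath ∧ m ≤ p.length ∧
        walkTime τ ω p ≤ K * m}).toReal ≤
      (Real.exp 1 / 10) / (1 - Real.exp 1 / 10) :=
  no_short_path_bound_general G P τ hmeas hindep hdist_edge v m hm K hK0 hK
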